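/- arXiv:2402.17619 — 2 statements merged into one kernel-verified Lean document; each statement's English description precedes it below -/
import Mathlib

section
/- Let T > 0, α ≥ 0, γ₁, γ₂ ∈ ℝ with γ₂ ≤ 0 ≤ γ₁, and let w₀ : ℝ → [0,∞) be measurable. Define K̂(t,ξ) = exp(−t(−ξ² + α|ξ|³ + ξ⁴)). Suppose (w_m)_{m∈ℕ} is a sequence of measurable functions [0,T] × ℝ → ℝ such that w_0(t,ξ) = K̂(t,ξ)·w₀(ξ) and, for every m ∈ ℕ, t ∈ [0,T] and ξ ∈ ℝ (all the integrals below being finite), w_{m+1}(t,ξ) = K̂(t,ξ)·w₀(ξ) + ∫_0^t K̂(t−τ,ξ)·[ γ₁ ∫_ℝ |ρ| w_m(τ,ρ) |ξ−ρ| w_m(τ,ξ−ρ) dρ − γ₂ ∫_ℝ w_m(τ,ρ) (ξ−ρ)² w_m(τ,ξ−ρ) dρ ] dτ. Then w_m(t,ξ) ≥ 0 for every m ∈ ℕ, every t ∈ [0,T] and every ξ ∈ ℝ. -/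
open MeasureTheory Real Set

/-- The Fourier symbol of the linear semigroup of the non-local dispersive
Kuramoto–Velarde equation: `K̂(t,ξ) = exp(-t(-ξ² + α|ξ|³ + ξ⁴))`. -/
noncomputable def Khat (α t ξ : ℝ) : ℝ := Real.exp (-t * (-ξ ^ 2 + α * |ξ| ^ 3 + ξ ^ 4))

/-- Positivity of the Fourier transforms of the Picard iterates: if the initial
datum has nonnegative Fourier transform `w₀`, `γ₂ ≤ 0 ≤ γ₁`, and the sequence
`(w_m)` satisfies the Picard iteration scheme (with all the integrals involved
finite), then `w_m(t,ξ) ≥ 0` for all `m`, `t ∈ [0,T]` and `ξ ∈ ℝ`. -/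
theorem picard_iterates_nonneg (T α γ₁ γ₂ : ℝ) (hT : 0 < T) (hα : 0 ≤ α)
    (hγ2 : γ₂ ≤ 0) (hγ1 : 0 ≤ γ₁)
    (w₀ : ℝ → ℝ) (hw₀meas : Measurable w₀) (hw₀ : ∀ ξ, 0 ≤ w₀ ξ)
    (w : ℕ → ℝ → ℝ → ℝ)
    (hwmeas : ∀ m, Measurable (Function.uncurry (w m)))
    (hbase : ∀ t ∈ Set.Icc (0:ℝ) T, ∀ ξ : ℝ, w 0 t ξ = Khat α t ξ * w₀ ξ)
    (hint1 : ∀ m, ∀ τ ∈ Set.Icc (0:ℝ) T, ∀ ξ : ℝ,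
      Integrable (fun ρ : ℝ => |ρ| * w m τ ρ * (|ξ - ρ| * w m τ (ξ - ρ))))
    (hint2 : ∀ m, ∀ τ ∈ Set.Icc (0:ℝ) T, ∀ ξ : ℝ,
      Integrable (fun ρ : ℝ => w m τ ρ * ((ξ - ρ) ^ 2 * w m τ (ξ - ρ))))
    (hint3 : ∀ m, ∀ t ∈ Set.Icc (0:ℝ) T, ∀ ξ : ℝ,
      IntegrableOn (fun τ : ℝ => Khat α (t - τ) ξ *
        (γ₁ * ∫ ρ : ℝ, |ρ| * w m τ ρ * (|ξ - ρ| * w m τ (ξ - ρ))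
          - γ₂ * ∫ ρ : ℝ, w m τ ρ * ((ξ - ρ) ^ 2 * w m τ (ξ - ρ)))) (Set.Ioc 0 t))
    (hrec : ∀ m, ∀ t ∈ Set.Icc (0:ℝ) T, ∀ ξ : ℝ,
      w (m + 1) t ξ = Khat α t ξ * w₀ ξ
        + ∫ τ in Set.Ioc (0:ℝ) t, Khat α (t - τ) ξ *
            (γ₁ * ∫ ρ : ℝ, |ρ| * w m τ ρ * (|ξ - ρ| * w m τ (ξ - ρ))
              - γ₂ * ∫ ρ : ℝ, w m τ ρ * ((ξ - ρ) ^ 2 * w m τ (ξ - ρ)))) :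
    ∀ m, ∀ t ∈ Set.Icc (0:ℝ) T, ∀ ξ : ℝ, 0 ≤ w m t ξ := by
  intro m
  induction m with
  | zero =>
    intro t ht ξ
    rw [hbase t ht ξ]
    exact mul_nonneg (Real.exp_pos _).le (hw₀ ξ)
  | succ m ih =>
    intro t ht ξ
    rw [hrec m t ht ξ]
    have hK : ∀ s : ℝ, 0 ≤ Khat α s ξ := fun s => (Real.exp_pos _).le
    apply add_nonneg (mul_nonneg (hK t) (hw₀ ξ))
    apply setIntegral_nonneg measurableSet_Ioc
    intro τ hτ
    have hτT : τ ∈ Set.Icc (0:ℝ) T := ⟨hτ.1.le, hτ.2.trans ht.2⟩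
    apply mul_nonneg (hK _)
    apply mul_nonneg hγ1
    apply integral_nonneg
    intro ρ
    have hA : 0 ≤ |ρ| * w m τ ρ * (|ξ - ρ| * w m τ (ξ - ρ)) :=
      mul_nonneg (mul_nonneg (abs_nonneg _) (ih τ hτT ρ))
        (mul_nonneg (abs_nonneg _) (ih τ hτT _))
    have hC : 0 ≤ ∫ ρ' : ℝ, w m τ ρ' * ((ξ - ρ') ^ 2 * w m τ (ξ - ρ')) := by
      apply integral_nonneg
      intro ρ'
      exact mul_nonneg (ih τ hτT ρ') (mul_nonneg (sq_nonneg _) (ih τ hτT _))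
    have h3 := mul_nonpos_of_nonpos_of_nonneg hγ2 hC
    simp only [Pi.zero_apply]
    linarith
end

section
/- For every n ∈ ℕ, ∫_{{ξ ∈ ℝ : 2^n < |ξ| < 2^{n+1}}} g_n(ξ)² dξ ≥ 2^{−n} (and since g_n vanishes outside this annulus, also ∫_ℝ g_n(ξ)² dξ ≥ 2^{−n}). -/
open MeasureTheory Real Set

/-- The sequence of functions `g n`: `g 0` is the indicator of `(1,2)` and
`g (n+1) = g n * g n` (convolution). -/
noncomputable def g : ℕ → ℝ → ℝ
  | 0 => Set.indicator (Set.Ioo (1:ℝ) 2) 1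
  | n + 1 => fun ξ => ∫ ρ : ℝ, g n ρ * g n (ξ - ρ)

/-- `f n t = exp(-(3/2) t 2^(n+4)) 2^(-5(2^n-1)) 2^(5n)`. -/
noncomputable def f (n : ℕ) (t : ℝ) : ℝ :=
  Real.exp (-(3/2) * t * 2 ^ (n + 4)) * (2:ℝ) ^ (-(5:ℝ) * ((2:ℝ) ^ n - 1)) * 2 ^ (5 * n)

/-- The blow-up time `T_* = (2 ln 2)/3`. -/
noncomputable def Tstar : ℝ := 2 * Real.log 2 / 3

/-- The (Fourier side) nonlinear term
`γ₁ (|·|v * |·|v)(ξ) - γ₂ (v * (·)² v)(ξ)`, as a well-defined element of `[0,∞]`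
(recall `γ₂ ≤ 0 ≤ γ₁`). -/
noncomputable def nlTerm (γ₁ γ₂ : ℝ) (vτ : ℝ → ℝ) (ξ : ℝ) : ENNReal :=
  ENNReal.ofReal γ₁ * ∫⁻ ρ : ℝ, ENNReal.ofReal (|ρ| * vτ ρ * (|ξ - ρ| * vτ (ξ - ρ)))
  + ENNReal.ofReal (-γ₂) * ∫⁻ ρ : ℝ, ENNReal.ofReal (vτ ρ * ((ξ - ρ)^2 * vτ (ξ - ρ)))

/-- A nonnegative measurable `v` on `[0,T] × ℝ` satisfies the Duhamel–Fourier
inequality if for all `t ∈ [0,T]` and `ξ ∈ ℝ`,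
`v(t,ξ) ≥ η e^{-(3/2)tξ⁴} 𝟙_{(1,2)}(ξ) + ∫₀ᵗ e^{-(3/2)(t-τ)ξ⁴} (γ₁ (|·|v*|·|v) - γ₂ (v*(·)²v))(τ,ξ) dτ`,
the right-hand side being well defined in `[0,∞]`. -/
def DuhamelIneq (γ₁ γ₂ η T : ℝ) (v : ℝ → ℝ → ℝ) : Prop :=
  ∀ t ∈ Set.Icc (0:ℝ) T, ∀ ξ : ℝ,
    ENNReal.ofReal (v t ξ) ≥
      ENNReal.ofReal (η * Real.exp (-(3/2) * t * ξ^4) * Set.indicator (Set.Ioo (1:ℝ) 2) 1 ξ)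
      + ∫⁻ τ in Set.Ioc (0:ℝ) t,
          ENNReal.ofReal (Real.exp (-(3/2) * (t - τ) * ξ^4)) * nlTerm γ₁ γ₂ (v τ) ξ

open scoped Convolution Pointwise

/-! Each `g n` is a probability density: it is nonnegative and convolution multiplies integrals.
Since supports add under convolution, `g n` lives on `(2^n, 2^(n+1))`, an interval of length `2^n`,
and Cauchy–Schwarz on it gives `1 = (∫ g n)² ≤ 2^n ∫ (g n)²`. -/

theorem sq_setIntegral_le_measureReal_mul_setIntegral_sq {α : Type*} [MeasurableSpace α]
    {μ : Measure α} {s : Set α} {f : α → ℝ} (hs : μ s ≠ ⊤) (hf : IntegrableOn f s μ)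
    (hf2 : IntegrableOn (fun x => f x ^ 2) s μ) :
    (∫ x in s, f x ∂μ) ^ 2 ≤ μ.real s * ∫ x in s, f x ^ 2 ∂μ := by
  rcases eq_or_ne (μ s) 0 with h0 | h0
  · simp [Measure.restrict_eq_zero.mpr h0]
  have hm : 0 < μ.real s := ENNReal.toReal_pos h0 hs
  have jensen := (even_two.convexOn_pow (𝕜 := ℝ)).map_set_average_le (f := f)
    (continuous_pow 2).continuousOn isClosed_univ h0 hs (.of_forall fun _ => mem_univ _) hf hf2
  simp only [setAverage_eq, smul_eq_mul, mul_pow] at jensen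
  rw [← mul_le_mul_iff_right₀ (inv_pos.mpr hm)]
  calc (μ.real s)⁻¹ * (∫ x in s, f x ∂μ) ^ 2
      = μ.real s * ((μ.real s)⁻¹ ^ 2 * (∫ x in s, f x ∂μ) ^ 2) := by field_simp
    _ ≤ μ.real s * ((μ.real s)⁻¹ * ∫ x in s, f x ^ 2 ∂μ) := by gcongr
    _ = _ := by ring

theorem g_succ (n : ℕ) : g (n + 1) = g n ⋆[ContinuousLinearMap.lsmul ℝ ℝ] g n := by
  ext ξ
  simp [g, convolution_def]

theorem g_nonneg (n : ℕ) (ξ : ℝ) : 0 ≤ g n ξ := by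
  induction n generalizing ξ with
  | zero => exact indicator_nonneg (fun _ _ => zero_le_one) ξ
  | succ n ih => exact integral_nonneg fun ρ => mul_nonneg (ih ρ) (ih (ξ - ρ))

theorem support_g_subset (n : ℕ) : Function.support (g n) ⊆ Ioo (2 ^ n) (2 ^ (n + 1)) := by
  induction n with
  | zero => simp [g]
  | succ n ih =>
    calc Function.support (g (n + 1))
        ⊆ Function.support (g n) + Function.support (g n) := by
          rw [g_succ]; exact support_convolution_subset _
      _ ⊆ Ioc ((2:ℝ) ^ n) (2 ^ (n + 1)) + Ico (2 ^ n) (2 ^ (n + 1)) :=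
          add_subset_add (ih.trans Ioo_subset_Ioc_self) (ih.trans Ioo_subset_Ico_self)
      _ ⊆ Ioo (2 ^ n + 2 ^ n) (2 ^ (n + 1) + 2 ^ (n + 1)) := Ioc_add_Ico_subset _ _ _ _
      _ = Ioo (2 ^ (n + 1)) (2 ^ (n + 1 + 1)) := by congr 1 <;> ring

theorem g_eq_zero_of_notMem {n : ℕ} {ξ : ℝ} (hξ : ξ ∉ Ioo (2 ^ n) (2 ^ (n + 1))) : g n ξ = 0 :=
  Function.notMem_support.mp fun h => hξ (support_g_subset n h)

theorem integrable_g (n : ℕ) : Integrable (g n) := by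
  induction n with
  | zero =>
    exact (integrable_indicator_iff measurableSet_Ioo).mpr
      (integrableOn_const measure_Ioo_lt_top.ne)
  | succ n ih => rw [g_succ]; exact ih.integrable_convolution _ ih

theorem integral_g (n : ℕ) : ∫ ξ, g n ξ = 1 := by
  induction n with
  | zero => simp [g, integral_indicator_one measurableSet_Ioo]; norm_num
  | succ n ih => rw [g_succ, integral_convolution _ (integrable_g n) (integrable_g n), ih]; simp

theorem g_le_one (n : ℕ) (ξ : ℝ) : g n ξ ≤ 1 := by
  induction n generalizing ξ with
  | zero => exact indicator_le_self' (fun _ _ => zero_le_one) ξ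
  | succ n ih =>
    calc g (n + 1) ξ = ∫ ρ, g n ρ * g n (ξ - ρ) := rfl
      _ ≤ ∫ ρ, g n ρ :=
        integral_mono_of_nonneg (.of_forall fun ρ => mul_nonneg (g_nonneg n ρ) (g_nonneg n _))
          (integrable_g n) (.of_forall fun ρ => mul_le_of_le_one_right (g_nonneg n ρ) (ih _))
      _ = 1 := integral_g n

theorem integrable_g_sq (n : ℕ) : Integrable fun ξ => g n ξ ^ 2 :=
  (integrable_g n).mono' ((integrable_g n).aestronglyMeasurable.pow 2) <| .of_forall fun ξ => by
    rw [Real.norm_eq_abs, abs_of_nonneg (sq_nonneg _), sq]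
    exact mul_le_of_le_one_right (g_nonneg n ξ) (g_le_one n ξ)

/-- For every `n`, `∫_{2^n < |ξ| < 2^(n+1)} g_n(ξ)² dξ ≥ 2^(-n)`; and since
`g n` vanishes outside this annulus, also `∫_ℝ g_n(ξ)² dξ ≥ 2^(-n)`. -/
theorem g_sq_integral_lower (n : ℕ) :
    ((2:ℝ) ^ (-(n:ℤ)) ≤ ∫ ξ in {ξ : ℝ | 2 ^ n < |ξ| ∧ |ξ| < 2 ^ (n + 1)}, (g n ξ) ^ 2) ∧
    ((2:ℝ) ^ (-(n:ℤ)) ≤ ∫ ξ : ℝ, (g n ξ) ^ 2) := by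
  set s : Set ℝ := Ioo (2 ^ n) (2 ^ (n + 1))
  have hvol : volume.real s = 2 ^ n := by
    rw [Real.volume_real_Ioo_of_le (by gcongr <;> norm_num)]; ring
  have hgs : ∫ ξ in s, g n ξ = 1 :=
    (setIntegral_eq_integral_of_forall_compl_eq_zero fun _ => g_eq_zero_of_notMem).trans
      (integral_g n)
  have hsq : ∀ t ⊇ s, ∫ ξ in t, g n ξ ^ 2 = ∫ ξ, g n ξ ^ 2 := fun t hst =>
    setIntegral_eq_integral_of_forall_compl_eq_zero fun ξ hξ => by
      rw [g_eq_zero_of_notMem fun h => hξ (hst h), zero_pow two_ne_zero]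
  have hann : s ⊆ {ξ : ℝ | 2 ^ n < |ξ| ∧ |ξ| < 2 ^ (n + 1)} := fun ξ hξ => by
    rwa [mem_ofPred_eq, abs_of_pos ((pow_pos two_pos n).trans hξ.1)]
  have hcs : 1 ≤ 2 ^ n * ∫ ξ, g n ξ ^ 2 := by
    simpa [hgs, hvol, hsq s subset_rfl] using
      sq_setIntegral_le_measureReal_mul_setIntegral_sq (s := s) measure_Ioo_lt_top.ne
        (integrable_g n).integrableOn (integrable_g_sq n).integrableOn
  have hlower : (2:ℝ) ^ (-(n:ℤ)) ≤ ∫ ξ, g n ξ ^ 2 := by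
    rwa [zpow_neg, zpow_natCast, inv_le_iff_one_le_mul₀' (by positivity)]
  exact ⟨(hsq _ hann).symm ▸ hlower, hlower⟩
end
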